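/- If (N, e_ρ, R) with |R| = |E| − |V| + 1 is orientable, then its orientation is unique: any two directed binary phylogenetic networks with underlying network N, root subdividing e_ρ, and reticulation set R are equal (assign the same direction to every edge). -/

import Mathlib

open Classical

/-- Indegree of a vertex in a digraph given by a relation. -/
noncomputable def inDeg {W : Type} (D : W → W → Prop) (b : W) : ℕ :=
  Nat.card {a : W // D a b}

/-- Outdegree of a vertex in a digraph given by a relation. -/
noncomputable def outDeg {W : Type} (D : W → W → Prop) (a : W) : ℕ :=
  Nat.card {b : W // D a b}

/-- A digraph is acyclic if it has no directed cycle. -/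
def DigraphAcyclic {W : Type} (D : W → W → Prop) : Prop :=
  ∀ a : W, ¬ Relation.TransGen D a a

/-- `D` is an orientation of the undirected graph `H`: every arc of `D` lies on an
edge of `H`, and every edge of `H` is given exactly one direction. -/
def IsOrientationOf {W : Type} (H : SimpleGraph W) (D : W → W → Prop) : Prop :=
  (∀ a b, D a b → H.Adj a b) ∧ (∀ a b, H.Adj a b → (D a b ↔ ¬ D b a))

/-- The graph obtained from `G` by subdividing the edge `{u,v}` with a new vertex
(represented by `none`). -/
def subdivide {V : Type} (G : SimpleGraph V) (u v : V) : SimpleGraph (Option V) where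
  Adj a b := match a, b with
    | some a', some b' => G.Adj a' b' ∧ ¬ (s(a', b') = s(u, v))
    | some a', none => a' = u ∨ a' = v
    | none, some b' => b' = u ∨ b' = v
    | none, none => False
  symm := by
    constructor
    intro a b h
    match a, b with
    | some a', some b' =>
        exact ⟨h.1.symm, fun he => h.2 (by rwa [Sym2.eq_swap] at he)⟩
    | some a', none => exact h
    | none, some b' => exact h
  loopless := by
    constructor
    intro a h
    match a with
    | some a' => exact G.irrefl h.1
    | none => exact h

/-- An undirected binary phylogenetic network: a connected graph in which every
vertex has degree `1` (a leaf) or degree `3`. -/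
def IsUndirBinNet {V : Type} [Fintype V] (G : SimpleGraph V) [DecidableRel G.Adj] : Prop :=
  G.Connected ∧ ∀ w : V, G.degree w = 1 ∨ G.degree w = 3

/-- An orientation of the binary network `G` with root subdividing the edge `{u,v}`
and reticulation set `R`: an acyclic orientation of the subdivided graph in which
the root has indegree `0`, the vertices of `R` have indegree `2` and all other
vertices have indegree `1`. -/
def IsBinOrientation {V : Type} [Fintype V] (G : SimpleGraph V) (u v : V) (R : Set V)
    (D : Option V → Option V → Prop) : Prop :=
  IsOrientationOf (subdivide G u v) D ∧ DigraphAcyclic D ∧ inDeg D none = 0 ∧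
    ∀ w : V, (w ∈ R ↔ inDeg D (some w) = 2) ∧ (w ∉ R → inDeg D (some w) = 1)

/-!
Two orientations of a finite graph with the same indegrees coincide as soon as one of them,
say `D₁`, is acyclic. Let `F` be the set of arcs of `D₁` that `D₂` reverses. Comparing the
two indegrees at a vertex shows that every vertex has as many incoming as outgoing `F`-arcs.
Since `D₁` is acyclic, among the heads of `F`-arcs there is one from which no other is
reachable along `D₁`; it must have an outgoing `F`-arc, a contradiction. So `F` is empty.
The indegrees of an orientation of `(N, e_ρ, R)` are fixed by `R`, hence the uniqueness.
-/

lemma inDeg_eq_ncard_add_ncard {W : Type} [Finite W] (D : W → W → Prop) (P : W → Prop)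
    (b : W) : inDeg D b = {a | D a b ∧ P a}.ncard + {a | D a b ∧ ¬ P a}.ncard :=
  (Nat.card_coe_set_eq _).trans (Set.ncard_inter_add_ncard_sdiff_eq_ncard _ {a | P a}).symm

lemma DigraphAcyclic.exists_mem_forall_not_transGen {W : Type} [Finite W]
    {D : W → W → Prop} (hD : DigraphAcyclic D) {S : Set W} (hS : S.Nonempty) :
    ∃ w ∈ S, ∀ c ∈ S, ¬ Relation.TransGen D w c :=
  (@Finite.wellFounded_of_trans_of_irrefl _ _ (flip (Relation.TransGen D))
    ⟨fun _ _ _ h₁ h₂ => h₂.trans h₁⟩ ⟨hD⟩).has_min S hS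

namespace IsOrientationOf

variable {W : Type} {H : SimpleGraph W} {D D₁ D₂ : W → W → Prop}

lemma not_iff (hD : IsOrientationOf H D) {a b : W} (hab : H.Adj a b) : ¬ D a b ↔ D b a :=
  (hD.2 b a hab.symm).symm

lemma imp_of_forall_imp (ho₁ : IsOrientationOf H D₁) (ho₂ : IsOrientationOf H D₂)
    (hle : ∀ a b, D₁ a b → D₂ a b) (a b : W) (h : D₂ a b) : D₁ a b :=
  by_contra fun hn => (ho₂.2 a b (ho₂.1 a b h)).mp h (hle b a ((ho₁.not_iff (ho₂.1 a b h)).mp hn))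

lemma ncard_reversed_in_eq_out [Finite W] (ho₁ : IsOrientationOf H D₁)
    (ho₂ : IsOrientationOf H D₂) (hdeg : ∀ b, inDeg D₁ b = inDeg D₂ b) (b : W) :
    {a | D₁ a b ∧ D₂ b a}.ncard = {c | D₁ b c ∧ D₂ c b}.ncard := by
  have h₁ := inDeg_eq_ncard_add_ncard D₁ (fun a => D₂ a b) b
  have h₂ := inDeg_eq_ncard_add_ncard D₂ (fun a => D₁ a b) b
  have hin : {a | D₁ a b ∧ ¬ D₂ a b} = {a | D₁ a b ∧ D₂ b a} := by
    ext a
    exact and_congr_right fun h => ho₂.not_iff (ho₁.1 a b h)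
  have hout : {a | D₂ a b ∧ ¬ D₁ a b} = {c | D₁ b c ∧ D₂ c b} := by
    ext a
    exact (and_congr_right fun h => ho₁.not_iff (ho₂.1 a b h)).trans and_comm
  have hboth : {a | D₂ a b ∧ D₁ a b} = {a | D₁ a b ∧ D₂ a b} := by
    ext a
    exact and_comm
  rw [hin] at h₁
  rw [hout, hboth] at h₂
  have := hdeg b
  omega

lemma imp_of_inDeg_eq [Finite W] (ho₁ : IsOrientationOf H D₁) (ho₂ : IsOrientationOf H D₂)
    (hac : DigraphAcyclic D₁) (hdeg : ∀ b, inDeg D₁ b = inDeg D₂ b) (a b : W) (h : D₁ a b) :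
    D₂ a b := by
  by_contra hn
  have hrev : D₂ b a := (ho₂.not_iff (ho₁.1 a b h)).mp hn
  obtain ⟨w, ⟨x, hxw⟩, hmax⟩ :=
    hac.exists_mem_forall_not_transGen (S := {w | ∃ x, D₁ x w ∧ D₂ w x}) ⟨b, a, h, hrev⟩
  have hout : {c | D₁ w c ∧ D₂ c w}.Nonempty := by
    rw [← Set.ncard_pos, ← ncard_reversed_in_eq_out ho₁ ho₂ hdeg w, Set.ncard_pos]
    exact ⟨x, hxw⟩
  obtain ⟨c, hwc⟩ := hout
  exact hmax c ⟨w, hwc⟩ (.single hwc.1)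

lemma iff_of_inDeg_eq [Finite W] (ho₁ : IsOrientationOf H D₁) (ho₂ : IsOrientationOf H D₂)
    (hac : DigraphAcyclic D₁) (hdeg : ∀ b, inDeg D₁ b = inDeg D₂ b) (a b : W) :
    D₁ a b ↔ D₂ a b :=
  ⟨ho₁.imp_of_inDeg_eq ho₂ hac hdeg a b,
    ho₁.imp_of_forall_imp ho₂ (ho₁.imp_of_inDeg_eq ho₂ hac hdeg) a b⟩

end IsOrientationOf

lemma IsBinOrientation.inDeg_eq {V : Type} [Fintype V] {G : SimpleGraph V} {u v : V}
    {R : Set V} {D₁ D₂ : Option V → Option V → Prop} (h₁ : IsBinOrientation G u v R D₁)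
    (h₂ : IsBinOrientation G u v R D₂) : ∀ b, inDeg D₁ b = inDeg D₂ b
  | none => h₁.2.2.1.trans h₂.2.2.1.symm
  | some w => by
    by_cases hw : w ∈ R
    · rw [((h₁.2.2.2 w).1).mp hw, ((h₂.2.2.2 w).1).mp hw]
    · rw [(h₁.2.2.2 w).2 hw, (h₂.2.2.2 w).2 hw]

theorem orientation_unique_general {V : Type} [Fintype V]
    (G : SimpleGraph V) (u v : V) (R : Set V)
    (D₁ D₂ : Option V → Option V → Prop)
    (h₁ : IsBinOrientation G u v R D₁) (h₂ : IsBinOrientation G u v R D₂) :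
    ∀ a b : Option V, D₁ a b ↔ D₂ a b :=
  h₁.1.iff_of_inDeg_eq h₂.1 h₁.2.1 (h₁.inDeg_eq h₂)

/-- Uniqueness of orientations: any two orientations of `(N, e_ρ, R)` (with
`|R| = |E| − |V| + 1`) assign the same direction to every edge. -/
theorem orientation_unique {V X : Type} [Fintype V] [DecidableEq V]
    (G : SimpleGraph V) [DecidableRel G.Adj] (hnet : IsUndirBinNet G)
    (labels : X ≃ {w : V // G.degree w = 1})
    (u v : V) (he : G.Adj u v) (R : Set V)
    (hcard : R.ncard + Fintype.card V = G.edgeSet.ncard + 1)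
    (D₁ D₂ : Option V → Option V → Prop)
    (h₁ : IsBinOrientation G u v R D₁) (h₂ : IsBinOrientation G u v R D₂) :
    ∀ a b : Option V, D₁ a b ↔ D₂ a b :=
  orientation_unique_general G u v R D₁ D₂ h₁ h₂
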